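/- arXiv:2307.00047 — 5 statements merged into one kernel-verified Lean document; each statement's English description precedes it below -/
import Mathlib

section
/- Let P be a 2-dimensional complex vector space and let A, B be ℂ-linear endomorphisms of P satisfying A∘A = 0, B∘B = 0 and A∘B + B∘A = 0. If A ≠ 0, then there exists a scalar c ∈ ℂ with B = c·A. -/
/-- Let `P` be a 2-dimensional complex vector space and `A, B` be `ℂ`-linear
endomorphisms of `P` with `A ∘ A = 0`, `B ∘ B = 0` and `A ∘ B + B ∘ A = 0`.  If `A ≠ 0`,
then there is a scalar `c ∈ ℂ` with `B = c • A`. -/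
theorem stmt_7 (P : Type) [AddCommGroup P] [Module ℂ P] (hP : Module.finrank ℂ P = 2)
    (A B : P →ₗ[ℂ] P) (hA : A ∘ₗ A = 0) (hB : B ∘ₗ B = 0)
    (hAB : A ∘ₗ B + B ∘ₗ A = 0) (hA0 : A ≠ 0) :
    ∃ c : ℂ, B = c • A := by
  have hfd : FiniteDimensional ℂ P := Module.finite_of_finrank_eq_succ hP
  obtain ⟨v, hv⟩ : ∃ v, A v ≠ 0 := by
    by_contra h; push_neg at h
    exact hA0 (LinearMap.ext fun x => h x)
  have hv0 : v ≠ 0 := fun h => hv (by simp [h])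
  have hAAv : A (A v) = 0 := by
    have := LinearMap.congr_fun hA v; simpa using this
  have hABv : A (B v) + B (A v) = 0 := by
    have := LinearMap.congr_fun hAB v; simpa using this
  have hBBv : B (B v) = 0 := by
    have := LinearMap.congr_fun hB v; simpa using this
  have hli : LinearIndependent ℂ ![v, A v] := by
    rw [LinearIndependent.pair_iff]
    intro s t hst
    have h2 : s • A v = 0 := by
      have := congrArg A hst
      simpa [hAAv, map_add, map_smul] using this
    have hs : s = 0 := by
      rcases smul_eq_zero.mp h2 with h | h
      · exact h
      · exact absurd h hv
    subst hs
    simp only [zero_smul, zero_add] at hst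
    rcases smul_eq_zero.mp hst with h | h
    · exact ⟨rfl, h⟩
    · exact absurd h hv
  have hcard : Fintype.card (Fin 2) = Module.finrank ℂ P := by simp [hP]
  let b := basisOfLinearIndependentOfCardEqFinrank hli hcard
  have hspan : Submodule.span ℂ {v, A v} = ⊤ := by
    have h := b.span_eq
    have hb : ⇑b = ![v, A v] := coe_basisOfLinearIndependentOfCardEqFinrank hli hcard
    rw [hb] at h
    convert h using 2
    case e'_3 => rfl
    ext x
    simp [Matrix.range_cons, Matrix.range_empty]
    tauto
  obtain ⟨α, β, hαβ⟩ : ∃ α β : ℂ, α • v + β • A v = B v := by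
    rw [← Submodule.mem_span_pair, hspan]; trivial
  have hABv' : A (B v) = α • A v := by
    rw [← hαβ]; simp [hAAv]
  have hBAv : B (A v) = -(α • A v) := by
    rw [← hABv']; exact eq_neg_of_add_eq_zero_right hABv
  have key : (α*α) • v = 0 := by
    have h2 : B (B v) = (α*α) • v := by
      conv_lhs => rw [← hαβ]
      rw [map_add, map_smul, map_smul, hBAv, ← hαβ]
      module
    rw [← h2, hBBv]
  have hα : α = 0 := by
    rcases smul_eq_zero.mp key with h | h
    · exact mul_self_eq_zero.mp h
    · exact absurd h hv0
  subst hα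
  rw [zero_smul, zero_add] at hαβ
  refine ⟨β, ?_⟩
  apply b.ext
  have hb : ⇑b = ![v, A v] := coe_basisOfLinearIndependentOfCardEqFinrank hli hcard
  intro i
  fin_cases i
  · simp [hb, ← hαβ]
  · simp [hb, hAAv, hBAv]
end

section
/- Let P be a 2-dimensional complex vector space and let A, B be ℂ-linear endomorphisms of P satisfying A∘A = 0, B∘B = 0 and A∘B + B∘A = 0. Then A∘B = 0. -/
/-- Let `P` be a 2-dimensional complex vector space and `A, B` be `ℂ`-linear
endomorphisms of `P` with `A ∘ A = 0`, `B ∘ B = 0` and `A ∘ B + B ∘ A = 0`.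
Then `A ∘ B = 0`. -/
theorem stmt_8 (P : Type) [AddCommGroup P] [Module ℂ P] (hP : Module.finrank ℂ P = 2)
    (A B : P →ₗ[ℂ] P) (hA : A ∘ₗ A = 0) (hB : B ∘ₗ B = 0)
    (hAB : A ∘ₗ B + B ∘ₗ A = 0) :
    A ∘ₗ B = 0 := by
  have : Module.Finite ℂ P := Module.finite_of_finrank_eq_succ hP
  by_contra h
  have hBA : B ∘ₗ A = -(A ∘ₗ B) := by
    have := hAB
    rw [add_comm] at this
    exact eq_neg_of_add_eq_zero_left this
  -- A ≠ 0, B ≠ 0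
  have hAne : A ≠ 0 := by rintro rfl; simp at h
  have hBne : B ≠ 0 := by rintro rfl; simp at h
  -- key compositions
  have hAAB : A ∘ₗ (A ∘ₗ B) = 0 := by rw [← LinearMap.comp_assoc, hA, LinearMap.zero_comp]
  have hBAB : B ∘ₗ (A ∘ₗ B) = 0 := by
    have : (B ∘ₗ A) ∘ₗ B = 0 := by
      rw [hBA, LinearMap.neg_comp, LinearMap.comp_assoc, hB, LinearMap.comp_zero]; simp
    rwa [LinearMap.comp_assoc] at this
  -- ranges and kernels
  have rA_le_kA : LinearMap.range A ≤ LinearMap.ker A := LinearMap.range_le_ker_iff.mpr hA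
  have rB_le_kB : LinearMap.range B ≤ LinearMap.ker B := LinearMap.range_le_ker_iff.mpr hB
  have rAB_le_kA : LinearMap.range (A ∘ₗ B) ≤ LinearMap.ker A := LinearMap.range_le_ker_iff.mpr hAAB
  have rAB_le_kB : LinearMap.range (A ∘ₗ B) ≤ LinearMap.ker B := LinearMap.range_le_ker_iff.mpr hBAB
  have rAB_le_rA : LinearMap.range (A ∘ₗ B) ≤ LinearMap.range A := LinearMap.range_comp_le_range _ _
  -- finrank facts
  have sumA := LinearMap.finrank_range_add_finrank_ker A
  have sumB := LinearMap.finrank_range_add_finrank_ker B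
  rw [hP] at sumA sumB
  have frA_pos : 0 < Module.finrank ℂ (LinearMap.range A) := by
    refine Nat.pos_of_ne_zero fun h0 => hAne ?_
    rw [Submodule.finrank_eq_zero, LinearMap.range_eq_bot] at h0; exact h0
  have frB_pos : 0 < Module.finrank ℂ (LinearMap.range B) := by
    refine Nat.pos_of_ne_zero fun h0 => hBne ?_
    rw [Submodule.finrank_eq_zero, LinearMap.range_eq_bot] at h0; exact h0
  have frAB_pos : 0 < Module.finrank ℂ (LinearMap.range (A ∘ₗ B)) := by
    refine Nat.pos_of_ne_zero fun h0 => h ?_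
    rw [Submodule.finrank_eq_zero, LinearMap.range_eq_bot] at h0; exact h0
  have mA := Submodule.finrank_mono rA_le_kA
  have mB := Submodule.finrank_mono rB_le_kB
  -- all relevant finranks are 1
  have frkA : Module.finrank ℂ (LinearMap.ker A) = 1 := by omega
  have frkB : Module.finrank ℂ (LinearMap.ker B) = 1 := by omega
  have frrA : Module.finrank ℂ (LinearMap.range A) = 1 := by omega
  have frAB1 : Module.finrank ℂ (LinearMap.range (A ∘ₗ B)) = 1 := by
    have := Submodule.finrank_mono rAB_le_kA; omega
  have eq1 : LinearMap.range (A ∘ₗ B) = LinearMap.ker B :=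
    Submodule.eq_of_le_of_finrank_le rAB_le_kB (by omega)
  have eq2 : LinearMap.range A = LinearMap.ker A :=
    Submodule.eq_of_le_of_finrank_le rA_le_kA (by omega)
  -- conclude: range B ≤ ker B = range (A∘B) ≤ range A = ker A
  have : LinearMap.range B ≤ LinearMap.ker A := by
    calc LinearMap.range B ≤ LinearMap.ker B := rB_le_kB
      _ = LinearMap.range (A ∘ₗ B) := eq1.symm
      _ ≤ LinearMap.range A := rAB_le_rA
      _ = LinearMap.ker A := eq2
  exact h (LinearMap.range_le_ker_iff.mp this)
end

section
/- Let V₂ and P be complex vector spaces with dim_ℂ V₂ = 2 and dim_ℂ P = 2, and let ρ : V₂ → End_ℂ(P) be a ℂ-linear map such that ρ(v)∘ρ(w) + ρ(w)∘ρ(v) = 0 for all v, w ∈ V₂. If ρ ≠ 0, then the range of ρ is a 1-dimensional subspace of End_ℂ(P) and the kernel of ρ is a 1-dimensional subspace of V₂. -/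
open Module

lemma key_anticomm {P : Type} [AddCommGroup P] [Module ℂ P] (hP : Module.finrank ℂ P = 2)
    (A B : P →ₗ[ℂ] P) (hA2 : A ∘ₗ A = 0) (hB2 : B ∘ₗ B = 0)
    (hAB : A ∘ₗ B + B ∘ₗ A = 0) (hA0 : A ≠ 0) : ∃ c : ℂ, B = c • A := by
  haveI : FiniteDimensional ℂ P := Module.finite_of_finrank_pos (by omega)
  obtain ⟨x, hx⟩ : ∃ x, A x ≠ 0 := by
    by_contra h
    push_neg at h
    exact hA0 (LinearMap.ext h)
  have hAA : ∀ y, A (A y) = 0 := fun y => congrFun (congrArg DFunLike.coe hA2) y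
  have hBB : ∀ y, B (B y) = 0 := fun y => congrFun (congrArg DFunLike.coe hB2) y
  have hABy : ∀ y, A (B y) + B (A y) = 0 := fun y =>
    congrFun (congrArg DFunLike.coe hAB) y
  have li : LinearIndependent ℂ ![x, A x] := by
    rw [LinearIndependent.pair_iff]
    intro s t hst
    have h1 : s • A x = 0 := by
      have h := congrArg A hst
      rw [map_add, map_smul, map_smul, hAA, smul_zero, add_zero, map_zero] at h
      exact h
    have hs : s = 0 := by
      rcases smul_eq_zero.mp h1 with h | h
      · exact h
      · exact absurd h hx
    subst hs
    simp only [zero_smul, zero_add] at hst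
    rcases smul_eq_zero.mp hst with h | h
    · exact ⟨rfl, h⟩
    · exact absurd h hx
  have hcard : Fintype.card (Fin 2) = Module.finrank ℂ P := by simp [hP]
  let b := basisOfLinearIndependentOfCardEqFinrank li hcard
  have hb : ⇑b = ![x, A x] := coe_basisOfLinearIndependentOfCardEqFinrank li hcard
  have hspan : Submodule.span ℂ ({x, A x} : Set P) = ⊤ := by
    have hs := b.span_eq
    rw [hb] at hs
    have hr : Set.range ![x, A x] = ({x, A x} : Set P) := by
      ext y
      simp only [Matrix.range_cons, Matrix.range_empty, Set.union_empty, Set.mem_insert_iff,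
        Set.union_singleton, Set.mem_singleton_iff]
      tauto
    rwa [hr] at hs
  -- B (A x) = 0
  have hBAx : B (A x) = 0 := by
    obtain ⟨s, t, hst⟩ := Submodule.mem_span_pair.mp (hspan ▸ Submodule.mem_top :
      B (A x) ∈ Submodule.span ℂ ({x, A x} : Set P))
    have hABAx : A (B (A x)) = 0 := by
      have := hABy (A x)
      simpa [hAA x] using this
    have h1 : s • A x = 0 := by
      have h := congrArg A hst
      rw [map_add, map_smul, map_smul, hAA, smul_zero, add_zero, hABAx] at h
      exact h
    have hs : s = 0 := by
      rcases smul_eq_zero.mp h1 with h | h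
      · exact h
      · exact absurd h hx
    subst hs
    simp only [zero_smul, zero_add] at hst
    -- B (A x) = t • A x, apply B: 0 = t • B (A x) = t^2 • A x
    have h2 : t • t • A x = 0 := by
      have h := congrArg B hst
      rw [map_smul, hBB, ← hst] at h
      exact h
    rcases smul_eq_zero.mp h2 with h | h
    · rw [← hst, h, zero_smul]
    · rcases smul_eq_zero.mp h with h' | h'
      · rw [← hst, h', zero_smul]
      · exact absurd h' hx
  -- B x = a • x + c • A x with a = 0
  obtain ⟨a, c, hac⟩ := Submodule.mem_span_pair.mp (hspan ▸ Submodule.mem_top :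
    B x ∈ Submodule.span ℂ ({x, A x} : Set P))
  have hBBx : a • B x = 0 := by
    have h := congrArg B hac
    rw [map_add, map_smul, map_smul, hBAx, smul_zero, add_zero, hBB] at h
    exact h
  have ha : a = 0 := by
    rcases smul_eq_zero.mp hBBx with h | h
    · exact h
    · rw [h] at hac
      have : a • x + c • A x = 0 := hac
      exact ((LinearIndependent.pair_iff.mp li) a c this).1
  subst ha
  simp only [zero_smul, zero_add] at hac
  refine ⟨c, ?_⟩
  apply b.ext
  intro i
  fin_cases i <;> simp [hb, hAA, hBAx, ← hac]

/-- Let `V₂` and `P` be complex vector spaces with `dim V₂ = dim P = 2`, and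
let `ρ : V₂ → End(P)` be a `ℂ`-linear map with `ρ v ∘ ρ w + ρ w ∘ ρ v = 0` for all `v, w`.
If `ρ ≠ 0`, then the range of `ρ` is a 1-dimensional subspace of `End(P)` and the kernel of
`ρ` is a 1-dimensional subspace of `V₂`. -/
theorem stmt_9 (V₂ P : Type) [AddCommGroup V₂] [Module ℂ V₂] [AddCommGroup P] [Module ℂ P]
    (hV₂ : Module.finrank ℂ V₂ = 2) (hP : Module.finrank ℂ P = 2)
    (ρ : V₂ →ₗ[ℂ] (P →ₗ[ℂ] P))
    (hanti : ∀ v w : V₂, ρ v ∘ₗ ρ w + ρ w ∘ₗ ρ v = 0)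
    (hρ : ρ ≠ 0) :
    Module.finrank ℂ (LinearMap.range ρ) = 1 ∧
    Module.finrank ℂ (LinearMap.ker ρ) = 1 := by
  haveI : FiniteDimensional ℂ V₂ := Module.finite_of_finrank_pos (by omega)
  have hsq : ∀ v : V₂, ρ v ∘ₗ ρ v = 0 := by
    intro v
    have h := hanti v v
    have h2 : (2 : ℂ) • (ρ v ∘ₗ ρ v) = 0 := by
      rw [two_smul]; exact h
    calc ρ v ∘ₗ ρ v = (2 : ℂ)⁻¹ • ((2 : ℂ) • (ρ v ∘ₗ ρ v)) := by
          rw [smul_smul]; norm_num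
      _ = 0 := by rw [h2, smul_zero]
  obtain ⟨v₀, hv₀⟩ : ∃ v, ρ v ≠ 0 := by
    by_contra h
    push_neg at h
    exact hρ (LinearMap.ext h)
  have hrange : LinearMap.range ρ = Submodule.span ℂ {ρ v₀} := by
    apply le_antisymm
    · rintro _ ⟨w, rfl⟩
      obtain ⟨cw, hcw⟩ := key_anticomm hP (ρ v₀) (ρ w) (hsq v₀) (hsq w) (hanti v₀ w) hv₀
      rw [hcw]
      exact Submodule.smul_mem _ _ (Submodule.mem_span_singleton_self _)
    · rw [Submodule.span_singleton_le_iff_mem]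
      exact LinearMap.mem_range_self ρ v₀
  have h1 : Module.finrank ℂ (LinearMap.range ρ) = 1 := by
    rw [hrange]
    exact finrank_span_singleton hv₀
  refine ⟨h1, ?_⟩
  have := LinearMap.finrank_range_add_finrank_ker ρ
  omega
end

section
/- Let θ denote the formal differential operator on ℚ⟦z⟧ given by θf = z·(df/dz). The formal power series h(z) = Σ_{m≥0} [(10m)! / ((5m)!·(2m)!·(m!)³)] z^{2m} satisfies θ⁴ h = 2⁸·5 · z² · (5θ+1)(5θ+3)(5θ+7)(5θ+9) h, i.e. h is annihilated by the Picard–Fuchs operator 𝒟 = θ⁴ − 2⁸·5· z² (5θ+1)(5θ+3)(5θ+7)(5θ+9). Equivalently, the coefficients c_m = (10m)!/((5m)!(2m)!(m!)³) satisfy m⁴ c_m = 80 (10m−1)(10m−3)(10m−7)(10m−9) c_{m−1} for all m ≥ 1. -/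
/-- The formal operator `θ = z · d/dz` on `ℚ⟦z⟧`, acting on coefficients by
`(θ f)ₙ = n · fₙ`. -/
noncomputable def theta : PowerSeries ℚ → PowerSeries ℚ := fun f =>
  PowerSeries.mk fun n => (n : ℚ) * PowerSeries.coeff n f

/-- The operator `a·θ + b` on `ℚ⟦z⟧`. -/
noncomputable def thetaOp (a b : ℚ) : PowerSeries ℚ → PowerSeries ℚ := fun g =>
  PowerSeries.C a * theta g + PowerSeries.C b * g

/-- The coefficients `c_m = (10m)! / ((5m)! (2m)! (m!)³)`. -/
noncomputable def c13 (m : ℕ) : ℚ :=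
  (Nat.factorial (10 * m) : ℚ) /
    ((Nat.factorial (5 * m) : ℚ) * (Nat.factorial (2 * m) : ℚ) *
      (Nat.factorial m : ℚ) ^ 3)

/-- The key recurrence for the coefficients `c13`. -/
lemma c13_rec (n : ℕ) :
    ((n : ℚ) + 1) ^ 4 * c13 (n + 1) =
      80 * (10 * ((n:ℚ)+1) - 1) * (10 * ((n:ℚ)+1) - 3) * (10 * ((n:ℚ)+1) - 7) *
        (10 * ((n:ℚ)+1) - 9) * c13 n := by
  unfold c13
  rw [show 10 * (n+1) = (10*n+9)+1 by ring, show 5 * (n+1) = (5*n+4)+1 by ring,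
    show 2 * (n+1) = (2*n+1)+1 by ring]
  rw [Nat.factorial_succ, show 10*n+9 = (10*n+8)+1 by ring, Nat.factorial_succ,
    show 10*n+8 = (10*n+7)+1 by ring, Nat.factorial_succ,
    show 10*n+7 = (10*n+6)+1 by ring, Nat.factorial_succ,
    show 10*n+6 = (10*n+5)+1 by ring, Nat.factorial_succ,
    show 10*n+5 = (10*n+4)+1 by ring, Nat.factorial_succ,
    show 10*n+4 = (10*n+3)+1 by ring, Nat.factorial_succ,
    show 10*n+3 = (10*n+2)+1 by ring, Nat.factorial_succ,
    show 10*n+2 = (10*n+1)+1 by ring, Nat.factorial_succ,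
    show 10*n+1 = (10*n)+1 by ring, Nat.factorial_succ]
  rw [Nat.factorial_succ (5*n+4), show 5*n+4 = (5*n+3)+1 by ring, Nat.factorial_succ,
    show 5*n+3 = (5*n+2)+1 by ring, Nat.factorial_succ,
    show 5*n+2 = (5*n+1)+1 by ring, Nat.factorial_succ,
    show 5*n+1 = (5*n)+1 by ring, Nat.factorial_succ]
  rw [Nat.factorial_succ (2*n+1), show 2*n+1 = (2*n)+1 by ring, Nat.factorial_succ,
    Nat.factorial_succ n]
  have h10 : ((10*n).factorial : ℚ) ≠ 0 := Nat.cast_ne_zero.2 (Nat.factorial_ne_zero _)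
  have h5 : ((5*n).factorial : ℚ) ≠ 0 := Nat.cast_ne_zero.2 (Nat.factorial_ne_zero _)
  have h2 : ((2*n).factorial : ℚ) ≠ 0 := Nat.cast_ne_zero.2 (Nat.factorial_ne_zero _)
  have h1 : ((n).factorial : ℚ) ≠ 0 := Nat.cast_ne_zero.2 (Nat.factorial_ne_zero _)
  have hn1 : ((n:ℚ)+1) ≠ 0 := by positivity
  have h2n1 : (2*(n:ℚ)+2) ≠ 0 := by positivity
  have h2n2 : (2*(n:ℚ)+1) ≠ 0 := by positivity
  push_cast
  field_simp
  ring

lemma coeff_theta (g : PowerSeries ℚ) (k : ℕ) :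
    PowerSeries.coeff k (theta g) = (k : ℚ) * PowerSeries.coeff k g := by
  simp [theta]

lemma coeff_thetaOp (a b : ℚ) (g : PowerSeries ℚ) (k : ℕ) :
    PowerSeries.coeff k (thetaOp a b g) = (a * k + b) * PowerSeries.coeff k g := by
  simp [thetaOp, coeff_theta]; ring

/-- The power series `h(z) = Σ_{m≥0} [(10m)!/((5m)!(2m)!(m!)³)] z^{2m}`
satisfies `θ⁴ h = 2⁸·5 · z² · (5θ+1)(5θ+3)(5θ+7)(5θ+9) h`, i.e. `h` is annihilated by the
Picard–Fuchs operator `𝒟 = θ⁴ − 2⁸·5 z² (5θ+1)(5θ+3)(5θ+7)(5θ+9)`.  Equivalently, the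
coefficients `c_m` satisfy `m⁴ c_m = 80 (10m−1)(10m−3)(10m−7)(10m−9) c_{m−1}` for `m ≥ 1`. -/
theorem stmt_13
    (h : PowerSeries ℚ)
    (hh : h = PowerSeries.mk fun n => if n % 2 = 0 then c13 (n / 2) else 0) :
    theta (theta (theta (theta h))) =
      ((2 : PowerSeries ℚ) ^ 8 * 5) * PowerSeries.X ^ 2 *
        (thetaOp 5 1 (thetaOp 5 3 (thetaOp 5 7 (thetaOp 5 9 h)))) ∧
    ∀ m : ℕ, 1 ≤ m →
      (m : ℚ) ^ 4 * c13 m =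
        80 * (10 * (m : ℚ) - 1) * (10 * (m : ℚ) - 3) * (10 * (m : ℚ) - 7) *
          (10 * (m : ℚ) - 9) * c13 (m - 1) := by
  constructor
  · have hc : ((2 : PowerSeries ℚ) ^ 8 * 5) = PowerSeries.C 1280 := by
      rw [show (2 : PowerSeries ℚ) = PowerSeries.C 2 from rfl,
        show (5 : PowerSeries ℚ) = PowerSeries.C 5 from rfl, ← map_pow, ← map_mul]
      norm_num
    ext n
    rw [hc, mul_assoc, PowerSeries.coeff_C_mul, PowerSeries.coeff_X_pow_mul']
    rw [coeff_theta, coeff_theta, coeff_theta, coeff_theta]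
    by_cases hn2 : 2 ≤ n
    · rw [if_pos hn2]
      obtain ⟨k, rfl⟩ : ∃ k, n = k + 2 := ⟨n - 2, by omega⟩
      rw [coeff_thetaOp, coeff_thetaOp, coeff_thetaOp, coeff_thetaOp]
      simp only [hh, PowerSeries.coeff_mk, Nat.add_sub_cancel]
      by_cases hk : k % 2 = 0
      · obtain ⟨m, rfl⟩ : ∃ m, k = 2 * m := ⟨k / 2, by omega⟩
        rw [if_pos (by omega), if_pos hk, show (2*m+2)/2 = m + 1 by omega,
          show (2*m)/2 = m by omega]
        push_cast
        nlinarith [c13_rec m]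
      · rw [if_neg (by omega), if_neg hk]
        ring
    · rw [if_neg hn2]
      interval_cases n <;> simp [hh]
  · intro m hm
    obtain ⟨n, rfl⟩ : ∃ n, m = n + 1 := ⟨m - 1, by omega⟩
    simp only [Nat.add_sub_cancel]
    push_cast
    exact c13_rec n
end

section
/- Let k ≥ 1 and let d₁, …, d_k be integers that are all congruent to one another modulo 2. Work in ℚ^{4+k} with the standard bilinear pairing ⟨·,·⟩. Define the subgroup M̃ = { v ∈ ℤ^{4+k} : 2(v₁+v₂+v₃+v₄) − Σ_{j=1}^{k} d_j v_{4+j} = 0 and Σ_{j=1}^{k} v_{4+j} is even }. Define Λ = ℤ^{4+k} + ℤ·h, where h = (0,0,0,0, ½, …, ½) ∈ ℚ^{4+k}, and let w₀ = (1,1,1,1, −d₁/2, …, −d_k/2); then w₀ ∈ Λ. Then: (i) for every m ∈ M̃ and n ∈ Λ one has ⟨m,n⟩ ∈ ℤ, and ⟨m,w₀⟩ = 0; and (ii) the induced map Λ/ℤw₀ → Hom_ℤ(M̃, ℤ), sending the class of n to the homomorphism m ↦ ⟨m,n⟩, is well defined and is an isomorphism of abelian groups. -/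
open scoped BigOperators

/-- The subgroup `ℤ^{4+k}` of vectors in `ℚ^{4+k}` with integer entries. -/
def intLat (k : ℕ) : AddSubgroup (Fin (4 + k) → ℚ) :=
  AddSubgroup.pi Set.univ fun _ => AddSubgroup.zmultiples (1 : ℚ)

/-- The standard bilinear pairing `⟨m, n⟩ = Σᵢ mᵢ nᵢ` on `ℚ^{4+k}`. -/
def pairQ (k : ℕ) (m n : Fin (4 + k) → ℚ) : ℚ := ∑ i, m i * n i

/-- The linear functional `v ↦ 2(v₁+v₂+v₃+v₄) − Σⱼ dⱼ v_{4+j}`. -/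
def phiHom (k : ℕ) (d : Fin k → ℤ) : (Fin (4 + k) → ℚ) →+ ℚ where
  toFun v := 2 * (∑ i : Fin 4, v (Fin.castAdd k i)) -
    ∑ j : Fin k, (d j : ℚ) * v (Fin.natAdd 4 j)
  map_zero' := by simp
  map_add' a b := by
    simp only [Pi.add_apply, mul_add, Finset.sum_add_distrib]
    ring

/-- The linear functional `v ↦ Σⱼ v_{4+j}`. -/
def psiHom (k : ℕ) : (Fin (4 + k) → ℚ) →+ ℚ where
  toFun v := ∑ j : Fin k, v (Fin.natAdd 4 j)
  map_zero' := by simp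
  map_add' a b := by simp [Finset.sum_add_distrib]

/-- The subgroup `M̃ = { v ∈ ℤ^{4+k} : 2(v₁+v₂+v₃+v₄) − Σⱼ dⱼ v_{4+j} = 0` and
`Σⱼ v_{4+j}` is even `}` of `ℚ^{4+k}`. -/
def Mtilde (k : ℕ) (d : Fin k → ℤ) : AddSubgroup (Fin (4 + k) → ℚ) :=
  intLat k ⊓ (phiHom k d).ker ⊓
    (AddSubgroup.zmultiples (2 : ℚ)).comap (psiHom k)

/-- The vector `h = (0, 0, 0, 0, ½, …, ½)`. -/
def hvec (k : ℕ) : Fin (4 + k) → ℚ := Fin.append (fun _ => 0) (fun _ => 1 / 2)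

/-- The lattice `Λ = ℤ^{4+k} + ℤ·h`. -/
def Lam (k : ℕ) : AddSubgroup (Fin (4 + k) → ℚ) :=
  intLat k ⊔ AddSubgroup.zmultiples (hvec k)

/-- The vector `w₀ = (1, 1, 1, 1, −d₁/2, …, −d_k/2)`. -/
def w0 (k : ℕ) (d : Fin k → ℤ) : Fin (4 + k) → ℚ :=
  Fin.append (fun _ => 1) (fun j => -(d j : ℚ) / 2)

-- aux
lemma mem_intLat_iff {k : ℕ} (v : Fin (4 + k) → ℚ) :
    v ∈ intLat k ↔ ∀ i, ∃ z : ℤ, v i = (z : ℚ) := by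
  simp [intLat, AddSubgroup.mem_pi, AddSubgroup.mem_zmultiples_iff, eq_comm]

lemma pairQ_split {k : ℕ} (m n : Fin (4 + k) → ℚ) :
    pairQ k m n = (∑ i : Fin 4, m (Fin.castAdd k i) * n (Fin.castAdd k i)) +
      ∑ j : Fin k, m (Fin.natAdd 4 j) * n (Fin.natAdd 4 j) :=
  Fin.sum_univ_add _

lemma phiHom_apply {k : ℕ} (d : Fin k → ℤ) (v : Fin (4 + k) → ℚ) :
    phiHom k d v = 2 * (∑ i : Fin 4, v (Fin.castAdd k i)) -
      ∑ j : Fin k, (d j : ℚ) * v (Fin.natAdd 4 j) := rfl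

lemma psiHom_apply {k : ℕ} (v : Fin (4 + k) → ℚ) :
    psiHom k v = ∑ j : Fin k, v (Fin.natAdd 4 j) := rfl

lemma mem_Mtilde_iff {k : ℕ} (d : Fin k → ℤ) (v : Fin (4 + k) → ℚ) :
    v ∈ Mtilde k d ↔ v ∈ intLat k ∧ phiHom k d v = 0 ∧ ∃ s : ℤ, psiHom k v = 2 * s := by
  simp only [Mtilde, AddSubgroup.mem_inf, AddMonoidHom.mem_ker, AddSubgroup.mem_comap,
    AddSubgroup.mem_zmultiples_iff, and_assoc]
  refine and_congr_right fun _ => and_congr_right fun _ => ⟨?_, ?_⟩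
  · rintro ⟨s, hs⟩; exact ⟨s, by rw [← hs, zsmul_eq_mul, mul_comm]⟩
  · rintro ⟨s, hs⟩; exact ⟨s, by rw [hs, zsmul_eq_mul, mul_comm]⟩

lemma mem_Lam_iff {k : ℕ} (n : Fin (4 + k) → ℚ) :
    n ∈ Lam k ↔ ∃ z ∈ intLat k, ∃ t : ℤ, n = z + t • hvec k := by
  rw [Lam, AddSubgroup.mem_sup]
  constructor
  · rintro ⟨y, hy, b, hb, rfl⟩
    obtain ⟨t, rfl⟩ := AddSubgroup.mem_zmultiples_iff.mp hb
    exact ⟨y, hy, t, rfl⟩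
  · rintro ⟨z, hz, t, rfl⟩
    exact ⟨z, hz, t • hvec k, AddSubgroup.mem_zmultiples_iff.mpr ⟨t, rfl⟩, rfl⟩

-- generators
def Bvec (k : ℕ) (i : Fin 4) : Fin (4 + k) → ℚ :=
  Fin.append (fun a => (if a = i then 1 else 0) - (if a = 0 then 1 else 0)) (fun _ => 0)

def Cvec (k : ℕ) (d : Fin k → ℤ) (j0 j : Fin k) : Fin (4 + k) → ℚ :=
  Fin.append (fun a => if a = 0 then (((d j + d j0) / 2 : ℤ) : ℚ) else 0)
    (fun b => (if b = j then 1 else 0) + (if b = j0 then 1 else 0))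

lemma q_cast {k : ℕ} (d : Fin k → ℤ) (j0 j : Fin k) (hpar : d j % 2 = d j0 % 2) :
    (((d j + d j0) / 2 : ℤ) : ℚ) * 2 = (d j : ℚ) + (d j0 : ℚ) := by
  have h : ((d j + d j0) / 2 : ℤ) * 2 = d j + d j0 :=
    Int.ediv_mul_cancel (by omega)
  exact_mod_cast congrArg (fun z : ℤ => (z : ℚ)) h

lemma Bvec_mem {k : ℕ} (d : Fin k → ℤ) (i : Fin 4) : Bvec k i ∈ Mtilde k d := by
  rw [mem_Mtilde_iff]
  refine ⟨?_, ?_, 0, ?_⟩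
  · rw [mem_intLat_iff]
    intro x
    induction x using Fin.addCases with
    | left a =>
      refine ⟨(if a = i then 1 else 0) - (if a = 0 then 1 else 0), ?_⟩
      simp [Bvec, Fin.append_left]
    | right b => exact ⟨0, by simp [Bvec, Fin.append_right]⟩
  · simp [phiHom_apply, Bvec, Fin.append_left, Fin.append_right,
      Finset.sum_sub_distrib]
  · simp [psiHom_apply, Bvec, Fin.append_right]

lemma Cvec_mem {k : ℕ} (d : Fin k → ℤ) (j0 j : Fin k)
    (hpar : d j % 2 = d j0 % 2) : Cvec k d j0 j ∈ Mtilde k d := by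
  rw [mem_Mtilde_iff]
  refine ⟨?_, ?_, 1, ?_⟩
  · rw [mem_intLat_iff]
    intro x
    induction x using Fin.addCases with
    | left a =>
      refine ⟨if a = 0 then ((d j + d j0) / 2 : ℤ) else 0, ?_⟩
      simp [Cvec, Fin.append_left]
    | right b =>
      refine ⟨(if b = j then 1 else 0) + (if b = j0 then 1 else 0), ?_⟩
      simp [Cvec, Fin.append_right]
  · have hq := q_cast d j0 j hpar
    simp only [phiHom_apply, Cvec, Fin.append_left, Fin.append_right]
    rw [Finset.sum_ite_eq' Finset.univ (0 : Fin 4)]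
    simp only [Finset.mem_univ, if_true, mul_add, Finset.sum_add_distrib]
    rw [Finset.sum_congr rfl (fun x _ => mul_ite (x = j) (d x : ℚ) 1 0),
        Finset.sum_congr rfl (fun x _ => mul_ite (x = j0) (d x : ℚ) 1 0)]
    simp only [mul_one, mul_zero, Finset.sum_ite_eq' Finset.univ, Finset.mem_univ, if_true]
    linarith [hq]
  · simp [psiHom_apply, Cvec, Fin.append_right, Finset.sum_add_distrib,
      Finset.sum_ite_eq' Finset.univ]
    norm_num

lemma pairQ_add_left {k : ℕ} (m m' n : Fin (4 + k) → ℚ) :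
    pairQ k (m + m') n = pairQ k m n + pairQ k m' n := by
  simp [pairQ, add_mul, Finset.sum_add_distrib]

lemma pairQ_smul_right {k : ℕ} (t : ℤ) (m n : Fin (4 + k) → ℚ) :
    pairQ k m (t • n) = t * pairQ k m n := by
  simp [pairQ, Finset.mul_sum, mul_left_comm]

lemma pairQ_add_right {k : ℕ} (m n n' : Fin (4 + k) → ℚ) :
    pairQ k m (n + n') = pairQ k m n + pairQ k m n' := by
  simp [pairQ, mul_add, Finset.sum_add_distrib]

def Bel (k : ℕ) (d : Fin k → ℤ) (i : Fin 4) : Mtilde k d := ⟨Bvec k i, Bvec_mem d i⟩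

def Cel (k : ℕ) (d : Fin k → ℤ) (hk : 1 ≤ k)
    (hpar : ∀ i j : Fin k, d i % 2 = d j % 2) (j : Fin k) : Mtilde k d :=
  ⟨Cvec k d ⟨0, hk⟩ j, Cvec_mem d ⟨0, hk⟩ j (hpar j ⟨0, hk⟩)⟩

lemma decomp {k : ℕ} {d : Fin k → ℤ} (hk : 1 ≤ k)
    (hpar : ∀ i j : Fin k, d i % 2 = d j % 2) (m : Mtilde k d) :
    ∃ (v : Fin 4 → ℤ) (u : Fin k → ℤ) (s : ℤ),
      (∀ i, (m : Fin (4 + k) → ℚ) (Fin.castAdd k i) = v i) ∧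
      (∀ j, (m : Fin (4 + k) → ℚ) (Fin.natAdd 4 j) = u j) ∧
      ((∑ j, u j) = 2 * s) ∧
      m = (∑ i, v i • Bel k d i) + (∑ j, u j • Cel k d hk hpar j)
            - s • Cel k d hk hpar ⟨0, hk⟩ := by
  obtain ⟨hint, hphi, s, hpsi⟩ := (mem_Mtilde_iff d m).mp m.2
  rw [mem_intLat_iff] at hint
  choose w hw using hint
  refine ⟨fun i => w (Fin.castAdd k i), fun j => w (Fin.natAdd 4 j), s,
    fun i => hw _, fun j => hw _, ?_, ?_⟩
  · have : (((∑ j, w (Fin.natAdd 4 j)) : ℤ) : ℚ) = ((2 * s : ℤ) : ℚ) := by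
      push_cast
      rw [← hpsi, psiHom_apply]
      exact (Finset.sum_congr rfl fun j _ => (hw _)).symm
    exact_mod_cast this
  · -- the subtype equation
    apply Subtype.ext
    have hcoe : ((((∑ i, w (Fin.castAdd k i) • Bel k d i) + (∑ j, w (Fin.natAdd 4 j) • Cel k d hk hpar j)
        - s • Cel k d hk hpar ⟨0, hk⟩ : Mtilde k d)) : Fin (4 + k) → ℚ)
        = (∑ i, (w (Fin.castAdd k i) : ℚ) • Bvec k i) + (∑ j, (w (Fin.natAdd 4 j) : ℚ) • Cvec k d ⟨0, hk⟩ j)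
          - (s : ℚ) • Cvec k d ⟨0, hk⟩ ⟨0, hk⟩ := by
      push_cast [Bel, Cel]
      simp [Int.cast_smul_eq_zsmul]
    rw [hcoe]
    have hq2 : ∀ j : Fin k, (((d j + d ⟨0, hk⟩) / 2 : ℤ) : ℚ) * 2
        = (d j : ℚ) + (d ⟨0, hk⟩ : ℚ) := fun j => q_cast d ⟨0, hk⟩ j (hpar j ⟨0, hk⟩)
    have hphiQ : 2 * (∑ i : Fin 4, (w (Fin.castAdd k i) : ℚ))
        - ∑ j, (d j : ℚ) * (w (Fin.natAdd 4 j) : ℚ) = 0 := by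
      have h := hphi
      rw [phiHom_apply] at h
      simp only [hw] at h
      exact h
    have hpsiQ : (∑ j, (w (Fin.natAdd 4 j) : ℚ)) = 2 * (s : ℚ) := by
      have h := hpsi
      rw [psiHom_apply] at h
      simp only [hw] at h
      exact_mod_cast h
    funext x
    induction x using Fin.addCases with
    | left a =>
      simp only [Finset.sum_apply, Pi.add_apply, Pi.sub_apply, Pi.smul_apply, smul_eq_mul,
        Bvec, Cvec, Fin.append_left]
      rcases eq_or_ne a 0 with rfl | ha
      · simp only [if_pos rfl, hw, mul_sub, mul_one, Finset.sum_sub_distrib, mul_ite,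
          mul_zero, Finset.sum_ite_eq, Finset.mem_univ, if_true]
        have key : (∑ j, (w (Fin.natAdd 4 j) : ℚ) * (((d j + d ⟨0, hk⟩) / 2 : ℤ) : ℚ)) * 2
            = (∑ j, (d j : ℚ) * (w (Fin.natAdd 4 j) : ℚ))
              + (∑ j, (w (Fin.natAdd 4 j) : ℚ)) * (d ⟨0, hk⟩ : ℚ) := by
          rw [Finset.sum_mul, Finset.sum_mul, ← Finset.sum_add_distrib]
          refine Finset.sum_congr rfl fun j _ => ?_
          rw [mul_assoc, hq2 j]
          ring
        have hqj0 : (((d ⟨0, hk⟩ + d ⟨0, hk⟩) / 2 : ℤ) : ℚ) = (d ⟨0, hk⟩ : ℚ) := by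
          have := hq2 ⟨0, hk⟩
          linarith
        rw [hqj0]
        have h3 : (∑ j, (w (Fin.natAdd 4 j) : ℚ)) * (d ⟨0, hk⟩ : ℚ)
            = 2 * (s : ℚ) * (d ⟨0, hk⟩ : ℚ) := by rw [hpsiQ]
        linarith [key, hphiQ, h3]
      · simp only [if_neg ha, hw, mul_sub, mul_one, mul_zero, mul_ite,
          Finset.sum_ite_eq, Finset.mem_univ, if_true]
        simp
    | right b =>
      simp only [Finset.sum_apply, Pi.add_apply, Pi.sub_apply, Pi.smul_apply, smul_eq_mul,
        Bvec, Cvec, Fin.append_right]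
      rcases eq_or_ne b ⟨0, hk⟩ with rfl | hb
      · simp only [if_pos rfl, hw, mul_add, mul_one, mul_zero, mul_ite,
          Finset.sum_add_distrib, Finset.sum_ite_eq, Finset.mem_univ, if_true]
        simp only [Finset.sum_const_zero, zero_add]
        linarith [hpsiQ]
      · simp only [if_neg hb, hw, mul_add, mul_one, mul_zero, mul_ite,
          Finset.sum_add_distrib, Finset.sum_ite_eq, Finset.mem_univ, if_true]
        simp

lemma pair_Bvec {k : ℕ} (i : Fin 4) (n : Fin (4 + k) → ℚ) :
    pairQ k (Bvec k i) n = n (Fin.castAdd k i) - n (Fin.castAdd k 0) := by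
  rw [pairQ_split]
  simp only [Bvec, Fin.append_left, Fin.append_right, zero_mul, Finset.sum_const_zero,
    add_zero, sub_mul, Finset.sum_sub_distrib, ite_mul, one_mul, zero_mul]
  rw [Finset.sum_ite_eq' Finset.univ i, Finset.sum_ite_eq' Finset.univ (0 : Fin 4)]
  simp

lemma pair_Cvec {k : ℕ} (d : Fin k → ℤ) (j0 j : Fin k) (n : Fin (4 + k) → ℚ) :
    pairQ k (Cvec k d j0 j) n = (((d j + d j0) / 2 : ℤ) : ℚ) * n (Fin.castAdd k 0)
      + n (Fin.natAdd 4 j) + n (Fin.natAdd 4 j0) := by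
  rw [pairQ_split]
  simp only [Cvec, Fin.append_left, Fin.append_right, ite_mul, zero_mul, add_mul, one_mul,
    Finset.sum_add_distrib]
  rw [Finset.sum_ite_eq' Finset.univ (0 : Fin 4), Finset.sum_ite_eq' Finset.univ j,
    Finset.sum_ite_eq' Finset.univ j0]
  simp [add_assoc]

lemma pair_hvec {k : ℕ} (m : Fin (4 + k) → ℚ) :
    pairQ k m (hvec k) = psiHom k m / 2 := by
  rw [pairQ_split, psiHom_apply]
  simp only [hvec, Fin.append_left, Fin.append_right, mul_zero, Finset.sum_const_zero,
    zero_add, Finset.sum_div]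
  exact Finset.sum_congr rfl fun j _ => by ring

lemma pair_w0 {k : ℕ} (d : Fin k → ℤ) (m : Fin (4 + k) → ℚ) :
    pairQ k m (w0 k d) = phiHom k d m / 2 := by
  rw [pairQ_split, phiHom_apply]
  simp only [w0, Fin.append_left, Fin.append_right, mul_one]
  rw [sub_div, Finset.sum_div]
  have h2 : (2 : ℚ) * (∑ i : Fin 4, m (Fin.castAdd k i)) / 2 = ∑ i : Fin 4, m (Fin.castAdd k i) := by
    ring
  rw [h2, sub_eq_add_neg, ← Finset.sum_neg_distrib]
  congr 1
  exact Finset.sum_congr rfl fun j _ => by ring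

lemma pair_int {k : ℕ} {d : Fin k → ℤ} {m n : Fin (4 + k) → ℚ}
    (hm : m ∈ Mtilde k d) (hn : n ∈ Lam k) : ∃ z : ℤ, pairQ k m n = z := by
  obtain ⟨hmint, _, s, hpsi⟩ := (mem_Mtilde_iff d m).mp hm
  obtain ⟨z, hz, t, rfl⟩ := (mem_Lam_iff n).mp hn
  rw [mem_intLat_iff] at hmint hz
  choose mw hmw using hmint
  choose zw hzw using hz
  refine ⟨(∑ i, mw i * zw i) + t * s, ?_⟩
  rw [pairQ_add_right, pairQ_smul_right, pair_hvec, hpsi]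
  push_cast
  congr 1
  · rw [pairQ]
    exact Finset.sum_congr rfl fun i _ => by rw [hmw, hzw]
  · ring

lemma w0_mem_Lam {k : ℕ} (hk : 1 ≤ k) (d : Fin k → ℤ)
    (hpar : ∀ i j : Fin k, d i % 2 = d j % 2) : w0 k d ∈ Lam k := by
  rw [mem_Lam_iff]
  refine ⟨Fin.append (fun _ => (1 : ℚ)) (fun j => (((d ⟨0, hk⟩ - d j) / 2 : ℤ) : ℚ)), ?_,
    -(d ⟨0, hk⟩), ?_⟩
  · rw [mem_intLat_iff]
    intro x
    induction x using Fin.addCases with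
    | left a => exact ⟨1, by simp [Fin.append_left]⟩
    | right b => exact ⟨(d ⟨0, hk⟩ - d b) / 2, by simp [Fin.append_right]⟩
  · funext x
    induction x using Fin.addCases with
    | left a =>
      simp [w0, hvec, Fin.append_left]
    | right b =>
      have hpb := hpar ⟨0, hk⟩ b
      have hd : (((d ⟨0, hk⟩ - d b) / 2 : ℤ) : ℚ) * 2 = (d ⟨0, hk⟩ : ℚ) - (d b : ℚ) := by
        have h : ((d ⟨0, hk⟩ - d b) / 2 : ℤ) * 2 = d ⟨0, hk⟩ - d b :=
          Int.ediv_mul_cancel (by omega)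
        exact_mod_cast congrArg (fun z : ℤ => (z : ℚ)) h
      rw [Pi.add_apply, Pi.smul_apply]
      simp only [w0, hvec, Fin.append_right]
      rw [zsmul_eq_mul]
      push_cast
      linarith

lemma pair_num_cast {k : ℕ} {d : Fin k → ℤ} {m n : Fin (4 + k) → ℚ}
    (hm : m ∈ Mtilde k d) (hn : n ∈ Lam k) :
    (((pairQ k m n).num : ℤ) : ℚ) = pairQ k m n := by
  obtain ⟨z, hz⟩ := pair_int hm hn
  rw [hz, Rat.num_intCast]

def pairHom {k : ℕ} {d : Fin k → ℤ} (n : Lam k) : Mtilde k d →+ ℤ where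
  toFun m := (pairQ k (m : Fin (4 + k) → ℚ) (n : Fin (4 + k) → ℚ)).num
  map_zero' := by simp [pairQ]
  map_add' m m' := by
    obtain ⟨a, ha⟩ := pair_int m.2 n.2
    obtain ⟨b, hb⟩ := pair_int m'.2 n.2
    have hco : ((m + m' : Mtilde k d) : Fin (4 + k) → ℚ)
        = (m : Fin (4 + k) → ℚ) + (m' : Fin (4 + k) → ℚ) := rfl
    show (pairQ k ((m + m' : Mtilde k d) : Fin (4 + k) → ℚ) (n : Fin (4 + k) → ℚ)).num
        = (pairQ k (m : Fin (4 + k) → ℚ) (n : Fin (4 + k) → ℚ)).num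
          + (pairQ k (m' : Fin (4 + k) → ℚ) (n : Fin (4 + k) → ℚ)).num
    rw [hco, pairQ_add_left, ha, hb, ← Int.cast_add, Rat.num_intCast,
      Rat.num_intCast, Rat.num_intCast]

def Fhom (k : ℕ) (d : Fin k → ℤ) : Lam k →+ (Mtilde k d →+ ℤ) where
  toFun := pairHom
  map_zero' := by
    ext m
    show (pairQ k (m : Fin (4 + k) → ℚ) (((0 : Lam k)) : Fin (4 + k) → ℚ)).num = 0
    simp [pairQ]
  map_add' n n' := by
    ext m
    obtain ⟨a, ha⟩ := pair_int m.2 n.2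
    obtain ⟨b, hb⟩ := pair_int m.2 n'.2
    have hco : ((n + n' : Lam k) : Fin (4 + k) → ℚ)
        = (n : Fin (4 + k) → ℚ) + (n' : Fin (4 + k) → ℚ) := rfl
    show (pairQ k (m : Fin (4 + k) → ℚ) ((n + n' : Lam k) : Fin (4 + k) → ℚ)).num
        = (pairQ k (m : Fin (4 + k) → ℚ) (n : Fin (4 + k) → ℚ)).num
          + (pairQ k (m : Fin (4 + k) → ℚ) (n' : Fin (4 + k) → ℚ)).num
    rw [hco, pairQ_add_right, ha, hb, ← Int.cast_add, Rat.num_intCast,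
      Rat.num_intCast, Rat.num_intCast]

lemma Fhom_apply {k : ℕ} {d : Fin k → ℤ} (n : Lam k) (m : Mtilde k d) :
    Fhom k d n m = (pairQ k (m : Fin (4 + k) → ℚ) (n : Fin (4 + k) → ℚ)).num := rfl

lemma Fval {k : ℕ} {d : Fin k → ℤ} (n : Lam k) (m : Mtilde k d) :
    ((Fhom k d n m : ℤ) : ℚ) = pairQ k (m : Fin (4 + k) → ℚ) (n : Fin (4 + k) → ℚ) :=
  pair_num_cast m.2 n.2

lemma pairw0 {k : ℕ} (d : Fin k → ℤ) : ∀ m ∈ Mtilde k d, pairQ k m (w0 k d) = 0 := by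
  intro m hm
  obtain ⟨-, hphi, -⟩ := (mem_Mtilde_iff d m).mp hm
  rw [pair_w0, hphi, zero_div]

lemma hker {k : ℕ} (hk : 1 ≤ k) (d : Fin k → ℤ)
    (hpar : ∀ i j : Fin k, d i % 2 = d j % 2) :
    (AddSubgroup.zmultiples (w0 k d)).addSubgroupOf (Lam k) = (Fhom k d).ker := by
  ext n
  rw [AddSubgroup.mem_addSubgroupOf, AddMonoidHom.mem_ker]
  constructor
  · intro h
    obtain ⟨c, hc⟩ := AddSubgroup.mem_zmultiples_iff.mp h
    ext m
    have hz : pairQ k (m : Fin (4 + k) → ℚ) (n : Fin (4 + k) → ℚ) = 0 := by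
      rw [← hc, pairQ_smul_right, pairw0 d _ m.2, mul_zero]
    have h2 := Fval n m
    rw [hz] at h2
    have : (Fhom k d n m : ℚ) = 0 := h2
    exact_mod_cast this
  · intro h
    have hz : ∀ m : Mtilde k d,
        pairQ k (m : Fin (4 + k) → ℚ) (n : Fin (4 + k) → ℚ) = 0 := by
      intro m
      rw [← Fval n m, h]
      simp
    set c := (n : Fin (4 + k) → ℚ) (Fin.castAdd k 0) with hcdef
    have hB : ∀ i : Fin 4, (n : Fin (4 + k) → ℚ) (Fin.castAdd k i) = c := by
      intro i
      have := hz (Bel k d i)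
      rw [show ((Bel k d i : Mtilde k d) : Fin (4 + k) → ℚ) = Bvec k i from rfl,
        pair_Bvec] at this
      linarith
    have hq2 : ∀ j : Fin k, (((d j + d ⟨0, hk⟩) / 2 : ℤ) : ℚ) * 2
        = (d j : ℚ) + (d ⟨0, hk⟩ : ℚ) := fun j => q_cast d ⟨0, hk⟩ j (hpar j ⟨0, hk⟩)
    have hC0 : (n : Fin (4 + k) → ℚ) (Fin.natAdd 4 ⟨0, hk⟩) = -(d ⟨0, hk⟩ : ℚ) * c / 2 := by
      have h5 := hz (Cel k d hk hpar ⟨0, hk⟩)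
      rw [show ((Cel k d hk hpar ⟨0, hk⟩ : Mtilde k d) : Fin (4 + k) → ℚ)
          = Cvec k d ⟨0, hk⟩ ⟨0, hk⟩ from rfl, pair_Cvec] at h5
      have hq := hq2 ⟨0, hk⟩
      rw [← hcdef] at h5
      linear_combination (1 / 2 : ℚ) * h5 - (c / 4) * hq
    have hC : ∀ j : Fin k, (n : Fin (4 + k) → ℚ) (Fin.natAdd 4 j) = -(d j : ℚ) * c / 2 := by
      intro j
      have h5 := hz (Cel k d hk hpar j)
      rw [show ((Cel k d hk hpar j : Mtilde k d) : Fin (4 + k) → ℚ)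
          = Cvec k d ⟨0, hk⟩ j from rfl, pair_Cvec] at h5
      have hq := hq2 j
      rw [← hcdef, hC0] at h5
      linear_combination h5 - (c / 2) * hq
    obtain ⟨z, hzmem, t, hdec⟩ := (mem_Lam_iff (n : Fin (4 + k) → ℚ)).mp n.2
    rw [mem_intLat_iff] at hzmem
    obtain ⟨cz, hcz⟩ := hzmem (Fin.castAdd k 0)
    have hcval : c = (cz : ℚ) := by
      rw [hcdef, hdec, Pi.add_apply, Pi.smul_apply]
      simp [hvec, Fin.append_left, hcz]
    refine AddSubgroup.mem_zmultiples_iff.mpr ⟨cz, ?_⟩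
    funext x
    induction x using Fin.addCases with
    | left a =>
      rw [Pi.smul_apply]
      simp only [w0, Fin.append_left, hB a, hcval, zsmul_eq_mul, mul_one]
    | right b =>
      rw [Pi.smul_apply]
      simp only [w0, Fin.append_right, hC b, hcval, zsmul_eq_mul]
      ring

lemma hsurj {k : ℕ} (hk : 1 ≤ k) (d : Fin k → ℤ)
    (hpar : ∀ i j : Fin k, d i % 2 = d j % 2) :
    Function.Surjective (Fhom k d) := by
  intro lam
  set A : Fin k → ℤ := fun j => lam (Cel k d hk hpar j) with hA
  set B : Fin 4 → ℤ := fun i => lam (Bel k d i) with hBdef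
  set nv : Fin (4 + k) → ℚ := Fin.append (fun i => (B i : ℚ))
    (fun j => ((A j - A ⟨0, hk⟩ : ℤ) : ℚ) + (A ⟨0, hk⟩ : ℚ) * (1 / 2)) with hnv
  have hnmem : nv ∈ Lam k := by
    rw [mem_Lam_iff]
    refine ⟨Fin.append (fun i => (B i : ℚ)) (fun j => ((A j - A ⟨0, hk⟩ : ℤ) : ℚ)), ?_,
      A ⟨0, hk⟩, ?_⟩
    · rw [mem_intLat_iff]
      intro x
      induction x using Fin.addCases with
      | left a => exact ⟨B a, by simp [Fin.append_left]⟩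
      | right b => exact ⟨A b - A ⟨0, hk⟩, by simp [Fin.append_right]⟩
    · funext x
      induction x using Fin.addCases with
      | left a =>
        rw [Pi.add_apply, Pi.smul_apply]
        simp [hnv, hvec, Fin.append_left]
      | right b =>
        rw [Pi.add_apply, Pi.smul_apply]
        simp only [hnv, hvec, Fin.append_right, zsmul_eq_mul]
  refine ⟨⟨nv, hnmem⟩, ?_⟩
  ext m
  obtain ⟨v, u, s, hv, hu, hsum, hmeq⟩ := decomp hk hpar m
  have hlam : lam m = (∑ i, v i * B i) + (∑ j, u j * A j) - s * A ⟨0, hk⟩ := by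
    rw [hmeq]
    rw [map_sub, map_add, map_sum, map_sum, map_zsmul]
    simp only [map_zsmul, smul_eq_mul]
    rfl
  have hpairv : pairQ k (m : Fin (4 + k) → ℚ) nv
      = (((∑ i, v i * B i) + (∑ j, u j * A j) - s * A ⟨0, hk⟩ : ℤ) : ℚ) := by
    rw [pairQ_split]
    have h1 : (∑ i : Fin 4, (m : Fin (4 + k) → ℚ) (Fin.castAdd k i) * nv (Fin.castAdd k i))
        = ∑ i : Fin 4, ((v i : ℚ) * (B i : ℚ)) := by
      refine Finset.sum_congr rfl fun i _ => ?_
      rw [hv i, hnv]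
      simp [Fin.append_left]
    have h2 : (∑ j : Fin k, (m : Fin (4 + k) → ℚ) (Fin.natAdd 4 j) * nv (Fin.natAdd 4 j))
        = ∑ j : Fin k, ((u j : ℚ) * (((A j - A ⟨0, hk⟩ : ℤ) : ℚ) + (A ⟨0, hk⟩ : ℚ) * (1 / 2))) := by
      refine Finset.sum_congr rfl fun j _ => ?_
      rw [hu j, hnv]
      simp [Fin.append_right]
    rw [h1, h2]
    have hsumQ : (∑ j, (u j : ℚ)) = 2 * (s : ℚ) := by
      exact_mod_cast congrArg (fun z : ℤ => (z : ℚ)) hsum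
    push_cast
    rw [show (∑ j, (u j : ℚ) * (((A j : ℚ) - (A ⟨0, hk⟩ : ℚ)) + (A ⟨0, hk⟩ : ℚ) * (1 / 2)))
        = (∑ j, (u j : ℚ) * (A j : ℚ)) + (∑ j, (u j : ℚ)) * ((A ⟨0, hk⟩ : ℚ) * (1 / 2))
          - (∑ j, (u j : ℚ)) * (A ⟨0, hk⟩ : ℚ) from by
      rw [Finset.sum_mul, Finset.sum_mul, ← Finset.sum_add_distrib, ← Finset.sum_sub_distrib]
      exact Finset.sum_congr rfl fun j _ => by ring]
    rw [hsumQ]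
    ring
  have hfin : ((Fhom k d ⟨nv, hnmem⟩ m : ℤ) : ℚ) = ((lam m : ℤ) : ℚ) := by
    rw [Fval ⟨nv, hnmem⟩ m, hlam]
    rw [show ((⟨nv, hnmem⟩ : Lam k) : Fin (4 + k) → ℚ) = nv from rfl, hpairv]
  exact_mod_cast hfin

/-- Let `k ≥ 1` and let `d₁, …, d_k` be integers all congruent to one
another modulo 2.  With `M̃`, `Λ`, `h`, `w₀` as above: (i) `⟨m, n⟩ ∈ ℤ` for all `m ∈ M̃`,
`n ∈ Λ`, and `⟨m, w₀⟩ = 0` for all `m ∈ M̃` (also `w₀ ∈ Λ`); and (ii) the induced map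
`Λ/ℤw₀ → Hom_ℤ(M̃, ℤ)`, sending the class of `n` to `m ↦ ⟨m, n⟩`, is well defined and an
isomorphism of abelian groups. -/
theorem stmt_17 (k : ℕ) (hk : 1 ≤ k) (d : Fin k → ℤ)
    (hpar : ∀ i j : Fin k, d i % 2 = d j % 2) :
    (∀ m ∈ Mtilde k d, ∀ n ∈ Lam k, ∃ z : ℤ, pairQ k m n = z) ∧
    (∀ m ∈ Mtilde k d, pairQ k m (w0 k d) = 0) ∧
    w0 k d ∈ Lam k ∧
    ∃ e : (Lam k ⧸ (AddSubgroup.zmultiples (w0 k d)).addSubgroupOf (Lam k)) ≃+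
        (Mtilde k d →+ ℤ),
      ∀ (n : Lam k) (m : Mtilde k d),
        ((e (QuotientAddGroup.mk n)) m : ℚ) =
          pairQ k (m : Fin (4 + k) → ℚ) (n : Fin (4 + k) → ℚ) := by
  refine ⟨fun m hm n hn => pair_int hm hn, pairw0 d, w0_mem_Lam hk d hpar, ?_⟩
  refine ⟨(QuotientAddGroup.quotientAddEquivOfEq (hker hk d hpar)).trans
    (QuotientAddGroup.quotientKerEquivOfSurjective (Fhom k d) (hsurj hk d hpar)), fun n m => ?_⟩
  rw [AddEquiv.trans_apply, QuotientAddGroup.quotientAddEquivOfEq_mk]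
  rw [show (QuotientAddGroup.quotientKerEquivOfSurjective (Fhom k d) (hsurj hk d hpar))
      (QuotientAddGroup.mk n) = Fhom k d n from rfl]
  exact Fval n m
end
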